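/- In the topos of trees, the double-negation operation ¬¬ : Ω → Ω, given at stage n by ¬¬ₙ(k) = 0 if k = 0 and n otherwise, preserves all joins in each Sub(X), and hence has a right adjoint □ : Sub(X) → Sub(X) (the 'always' modality). -/

import Mathlib

open CategoryTheory

structure TObj : Type 1 where
  X : ℕ → Type
  res : ∀ n, X (n+1) → X n

@[ext]
structure THom (A B : TObj) : Type where
  app : ∀ n, A.X n → B.X n
  nat : ∀ n (x : A.X (n+1)), app n (A.res n x) = B.res n (app (n+1) x)

instance : Category TObj where
  Hom := THom
  id A := ⟨fun _ x => x, fun _ _ => rfl⟩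
  comp f g := ⟨fun n x => g.app n (f.app n x), fun n x => by (try dsimp only); rw [f.nat, g.nat]⟩
  id_comp f := rfl
  comp_id f := rfl
  assoc f g h := rfl

def Delta (Z : Type) : TObj := ⟨fun _ => Z, fun _ z => z⟩

def LaterX (A : TObj) : ℕ → Type
  | 0 => PUnit
  | n+1 => A.X n

def LaterRes (A : TObj) : ∀ n, LaterX A (n+1) → LaterX A n
  | 0 => fun _ => PUnit.unit
  | n+1 => A.res n

def LaterObj (A : TObj) : TObj := ⟨LaterX A, LaterRes A⟩

def LaterMap {A B : TObj} (f : A ⟶ B) : LaterObj A ⟶ LaterObj B where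
  app := fun n => match n with
    | 0 => fun _ => PUnit.unit
    | n+1 => f.app n
  nat := fun n => match n with
    | 0 => fun _ => rfl
    | n+1 => fun x => f.nat n x

def nextT (A : TObj) : A ⟶ LaterObj A where
  app := fun n => match n with
    | 0 => fun _ => PUnit.unit
    | n+1 => A.res n
  nat := fun n => match n with
    | 0 => fun _ => rfl
    | n+1 => fun _ => rfl

def toUnitT (A : TObj) : A ⟶ Delta PUnit := ⟨fun _ _ => PUnit.unit, fun _ _ => rfl⟩

def OmegaObj : TObj where
  X := fun n => Fin (n+2)
  res := fun n k => ⟨min (n+1) k.val, by omega⟩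

def trueT : Delta PUnit ⟶ OmegaObj where
  app := fun n _ => ⟨n+1, by omega⟩
  nat := fun n _ => by
    apply Fin.ext
    show n+1 = min (n+1) (n+2)
    omega

def topT (X : TObj) : X ⟶ OmegaObj where
  app := fun n _ => ⟨n+1, by omega⟩
  nat := fun n _ => by
    apply Fin.ext
    show n+1 = min (n+1) (n+2)
    omega

def laterOmega : OmegaObj ⟶ OmegaObj where
  app := fun n k => ⟨min (n+1) (k.val+1), by omega⟩
  nat := fun n k => by
    apply Fin.ext
    show min (n+1) (min (n+1) k.val + 1) = min (n+1) (min (n+2) (k.val+1))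
    omega

def nnOmega : OmegaObj ⟶ OmegaObj where
  app := fun n k => ⟨if k.val = 0 then 0 else n+1, by split <;> omega⟩
  nat := fun n k => by
    apply Fin.ext
    show (if min (n+1) k.val = 0 then 0 else n+1) = min (n+1) (if k.val = 0 then 0 else n+2)
    rcases Nat.eq_zero_or_pos k.val with h | h
    · simp [h]
    · rw [if_neg (by omega), if_neg (by omega)]; omega

def ProdObj (A B : TObj) : TObj :=
  ⟨fun n => A.X n × B.X n, fun n p => (A.res n p.1, B.res n p.2)⟩

def proj1 (A B : TObj) : ProdObj A B ⟶ A := ⟨fun _ p => p.1, fun _ _ => rfl⟩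
def proj2 (A B : TObj) : ProdObj A B ⟶ B := ⟨fun _ p => p.2, fun _ _ => rfl⟩

def pairT {C A B : TObj} (f : C ⟶ A) (g : C ⟶ B) : C ⟶ ProdObj A B where
  app := fun n x => (f.app n x, g.app n x)
  nat := fun n x => by
    try dsimp only
    show _ = (A.res n (f.app (n+1) x), B.res n (g.app (n+1) x))
    rw [f.nat, g.nat]

def canProd (A B : TObj) : LaterObj (ProdObj A B) ⟶ ProdObj (LaterObj A) (LaterObj B) :=
  pairT (LaterMap (proj1 A B)) (LaterMap (proj2 A B))

def ExpObj (X Y : TObj) : TObj where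
  X := fun n => {f : ∀ k, k ≤ n → X.X k → Y.X k //
    ∀ k (h : k+1 ≤ n) (x : X.X (k+1)),
      f k (Nat.le_of_succ_le h) (X.res k x) = Y.res k (f (k+1) h x)}
  res := fun n f =>
    ⟨fun k h => f.1 k (h.trans (Nat.le_succ n)),
     fun k h x => f.2 k (h.trans (Nat.le_succ n)) x⟩

def limE {X Y : TObj} (g : Delta PUnit ⟶ ExpObj X Y) :
    (Delta PUnit ⟶ X) → (Delta PUnit ⟶ Y) := fun x =>
  { app := fun n u => (g.app n u).1 n (le_refl n) (x.app n u)
    nat := fun n u => by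
      have hg : g.app n u = (ExpObj X Y).res n (g.app (n+1) u) := g.nat n u
      have hx : x.app n u = X.res n (x.app (n+1) u) := x.nat n u
      show (g.app n u).1 n (le_refl n) (x.app n u) =
        Y.res n ((g.app (n+1) u).1 (n+1) (le_refl (n+1)) (x.app (n+1) u))
      rw [hg, hx]
      exact (g.app (n+1) u).2 n (le_refl (n+1)) (x.app (n+1) u) }


instance (n : ℕ) : LinearOrder (OmegaObj.X n) :=
  inferInstanceAs (LinearOrder (Fin (n+2)))

instance subPartialOrder (A : TObj) : PartialOrder (A ⟶ OmegaObj) where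
  le phi psi := ∀ n (x : A.X n), phi.app n x ≤ psi.app n x
  le_refl phi := fun n x => le_refl _
  le_trans phi psi chi h1 h2 := fun n x => le_trans (h1 n x) (h2 n x)
  le_antisymm phi psi h1 h2 := by
    apply THom.ext
    funext n x
    exact le_antisymm (h1 n x) (h2 n x)

/-! Joins in `Sub(A)` are computed pointwise: each `Ωₙ` is a finite chain, and both the restriction
maps of `Ω` and `¬¬ₙ` are monotone and fix `0`, so they commute with suprema. Hence composing
with `¬¬` preserves all joins, and its right adjoint is `□ψ = ⋁ {φ | ¬¬φ ≤ ψ}`. -/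

noncomputable instance (n : ℕ) : CompleteLinearOrder (OmegaObj.X n) :=
  inferInstanceAs (CompleteLinearOrder (Fin (n+2)))

instance (n : ℕ) : Finite (OmegaObj.X n) :=
  inferInstanceAs (Finite (Fin (n+2)))

theorem Monotone.map_sSup_of_finite {α β : Type*} [CompleteLinearOrder α] [CompleteLattice β]
    {f : α → β} (hf : Monotone f) (hbot : f ⊥ = ⊥) {s : Set α} (hs : s.Finite) :
    f (sSup s) = sSup (f '' s) := by
  rcases s.eq_empty_or_nonempty with rfl | hne
  · simp [hbot]
  · exact Set.Finite.map_sSup_of_monotone hf hne hs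

theorem OmegaObj.res_mono (n : ℕ) : Monotone (OmegaObj.res n) := fun _ _ hab =>
  Fin.le_def.2 (min_le_min_left (n+1) hab)

theorem OmegaObj.res_bot (n : ℕ) : OmegaObj.res n ⊥ = ⊥ :=
  Fin.ext (Nat.min_zero (n+1))

theorem nnOmega_app_mono (n : ℕ) : Monotone (nnOmega.app n) := fun a b hab => by
  have hab : a.val ≤ b.val := hab
  show (if a.val = 0 then 0 else n+1) ≤ (if b.val = 0 then 0 else n+1)
  split <;> split <;> omega

theorem nnOmega_app_bot (n : ℕ) : nnOmega.app n ⊥ = ⊥ := rfl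

namespace THom

variable {A : TObj}

noncomputable instance : SupSet (A ⟶ OmegaObj) where
  sSup Phi :=
    { app := fun n x => sSup ((fun phi : A ⟶ OmegaObj => phi.app n x) '' Phi)
      nat := fun n x => by
        rw [OmegaObj.res_mono n |>.map_sSup_of_finite (OmegaObj.res_bot n) (Set.toFinite _),
          Set.image_image]
        exact congrArg sSup (Set.image_congr fun phi _ => phi.nat n x) }

theorem sSup_app (Phi : Set (A ⟶ OmegaObj)) (n : ℕ) (x : A.X n) :
    (sSup Phi).app n x = sSup ((fun phi : A ⟶ OmegaObj => phi.app n x) '' Phi) :=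
  rfl

noncomputable instance : CompleteSemilatticeSup (A ⟶ OmegaObj) where
  __ := subPartialOrder A
  isLUB_sSup Phi :=
    ⟨fun phi hphi n x => le_sSup ⟨phi, hphi, rfl⟩,
     fun _ hchi n x => sSup_le (by rintro _ ⟨phi, hphi, rfl⟩; exact hchi hphi n x)⟩

noncomputable instance : CompleteLattice (A ⟶ OmegaObj) :=
  completeLatticeOfCompleteSemilatticeSup (A ⟶ OmegaObj)

theorem sSup_comp {g : OmegaObj ⟶ OmegaObj} (hmono : ∀ n, Monotone (g.app n))
    (hbot : ∀ n, g.app n ⊥ = ⊥) (Phi : Set (A ⟶ OmegaObj)) :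
    sSup Phi ≫ g = sSup ((· ≫ g) '' Phi) := by
  refine THom.ext (funext fun n => funext fun x => ?_)
  change g.app n ((sSup Phi).app n x) = (sSup ((· ≫ g) '' Phi)).app n x
  rw [sSup_app, sSup_app, (hmono n).map_sSup_of_finite (hbot n) (Set.toFinite _),
    Set.image_image, Set.image_image]
  rfl

end THom

theorem galoisConnection_of_isLUB_image {α β : Type*} [CompleteLattice α] [Preorder β]
    {f : α → β} (hf : Monotone f) (hlub : ∀ s, IsLUB (f '' s) (f (sSup s))) :
    GaloisConnection f (fun b => sSup {a | f a ≤ b}) := fun a b =>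
  ⟨fun h => le_sSup h,
   fun h => (hf h).trans ((hlub _).2 (by rintro _ ⟨a', ha', rfl⟩; exact ha'))⟩

/-- The double-negation operation `¬¬ : Ω → Ω`, given at stage `n` by `k ↦ 0` if
`k = 0` and `k ↦ n` otherwise, preserves all joins in each `Sub(X)` (ordered
pointwise), and hence has a right adjoint `□ : Sub(X) → Sub(X)`, the `always`
modality. -/
theorem doubleNegation_preserves_joins_has_right_adjoint (A : TObj) :
    (∀ (Phi : Set (A ⟶ OmegaObj)) (phi0 : A ⟶ OmegaObj),
        IsLUB Phi phi0 → IsLUB ((fun phi => phi ≫ nnOmega) '' Phi) (phi0 ≫ nnOmega)) ∧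
    (∃ alw : (A ⟶ OmegaObj) → (A ⟶ OmegaObj),
        GaloisConnection (fun phi => phi ≫ nnOmega) alw) := by
  have hlub (Phi : Set (A ⟶ OmegaObj)) :
      IsLUB ((fun phi => phi ≫ nnOmega) '' Phi) (sSup Phi ≫ nnOmega) := by
    rw [THom.sSup_comp nnOmega_app_mono nnOmega_app_bot]
    exact isLUB_sSup _
  have hmono : Monotone (fun phi : A ⟶ OmegaObj => phi ≫ nnOmega) :=
    fun _ _ h n x => nnOmega_app_mono n (h n x)
  exact ⟨fun Phi _ h => h.sSup_eq ▸ hlub Phi, _, galoisConnection_of_isLUB_image hmono hlub⟩
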